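/- arXiv:1307.1016 — 4 statements merged into one kernel-verified Lean document; each statement's English description precedes it below -/
import Mathlib

section
/- Let A be a Boolean algebra, V a set, and f : A → Set V a map satisfying f(⊤) = V, f(a ⊓ b) = f(a) ∩ f(b), and f(aᶜ) = V \ f(a) for all a, b ∈ A. Suppose f is an atomic representation, i.e. ⋃_{x an atom of A} f(x) = V. Then for every subset Y ⊆ A whose only lower bound in A is ⊥, we have ⋂_{y ∈ Y} f(y) = ∅. -/
/-!
A point `v` lies in `f x` for some atom `x`. Since `x ≠ ⊥` is not a lower bound of `Y`, some
`y ∈ Y` is not above `x`, and an atom not below `y` is disjoint from it. Hence `f x` and `f y`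
are disjoint, so `v ∉ f y`.
-/

section

variable {A V : Type*} [BooleanAlgebra A] {f : A → Set V}

lemma map_bot_eq_empty_of_map_inf_of_map_compl
    (hinf : ∀ a b : A, f (a ⊓ b) = f a ∩ f b) (hcompl : ∀ a : A, f aᶜ = (f a)ᶜ) :
    f ⊥ = ∅ := by
  rw [← inf_compl_self (⊤ : A), hinf, hcompl, Set.inter_compl_self]

lemma disjoint_map_of_disjoint (hinf : ∀ a b : A, f (a ⊓ b) = f a ∩ f b) (hbot : f ⊥ = ∅)
    {a b : A} (hab : Disjoint a b) : Disjoint (f a) (f b) := by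
  rw [Set.disjoint_iff_inter_eq_empty, ← hinf, hab.eq_bot, hbot]

end

lemma IsAtom.exists_disjoint_of_lowerBounds_eq_bot {A : Type*} [BooleanAlgebra A] {x : A}
    (hx : IsAtom x) {Y : Set A} (hY : ∀ b : A, (∀ y ∈ Y, b ≤ y) → b = ⊥) :
    ∃ y ∈ Y, Disjoint x y := by
  by_contra! h
  exact hx.ne_bot <| hY x fun y hy => hx.not_disjoint_iff_le.mp (h y hy)

theorem stmt1_general {A V : Type*} [BooleanAlgebra A] (f : A → Set V)
    (hinf : ∀ a b : A, f (a ⊓ b) = f a ∩ f b)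
    (hcompl : ∀ a : A, f aᶜ = (f a)ᶜ)
    (hatomic : ⋃ x ∈ {x : A | IsAtom x}, f x = Set.univ)
    (Y : Set A) (hY : ∀ b : A, (∀ y ∈ Y, b ≤ y) → b = ⊥) :
    ⋂ y ∈ Y, f y = ∅ := by
  have hbot := map_bot_eq_empty_of_map_inf_of_map_compl hinf hcompl
  refine Set.eq_empty_of_forall_notMem fun v hv => ?_
  obtain ⟨x, hx, hvx⟩ := Set.mem_iUnion₂.mp (hatomic.symm ▸ Set.mem_univ v)
  obtain ⟨y, hyY, hxy⟩ := IsAtom.exists_disjoint_of_lowerBounds_eq_bot hx hY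
  exact Set.disjoint_left.mp (disjoint_map_of_disjoint hinf hbot hxy) hvx
    (Set.mem_iInter₂.mp hv y hyY)

theorem stmt1 {A V : Type*} [BooleanAlgebra A] (f : A → Set V)
    (htop : f ⊤ = Set.univ)
    (hinf : ∀ a b : A, f (a ⊓ b) = f a ∩ f b)
    (hcompl : ∀ a : A, f aᶜ = (f a)ᶜ)
    (hatomic : ⋃ x ∈ {x : A | IsAtom x}, f x = Set.univ)
    (Y : Set A) (hY : ∀ b : A, (∀ y ∈ Y, b ≤ y) → b = ⊥) :
    ⋂ y ∈ Y, f y = ∅ :=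
  stmt1_general f hinf hcompl hatomic Y hY
end

section
/- Let U be a set with at least two elements, and let B be an atomless field of sets on U that separates points. Let A be the collection of all finite unions of rectangles X × Y with X, Y ∈ B. Then: (i) every a ∈ A that contains the off-diagonal {(u,v) : u ≠ v} equals U × U, so U × U is the least upper bound in A of the family S = {X × (U \ X) : X ∈ B}; (ii) the operation s(Z) = {(u,v) ∈ U × U : (u,u) ∈ Z} satisfies s(X × (U \ X)) = ∅ for every X ∈ B, while s(U × U) = U × U ≠ ∅. Hence s does not preserve the supremum of S in A (s is not completely additive on A). -/
/-!
Given finitely many rectangles `X i ×ˢ Y i` of `B`-sets, the points of `U` that lie in exactly the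
same `X i` and `Y i` as `u` form a set `C ∈ B` containing `u`. By atomlessness `C` has two distinct
points `x ≠ y`; the off-diagonal pair `(x, y)` lies in some `X i ×ˢ Y i`, and since `x` and `y`
cannot be told apart from `u` by `X i` and `Y i`, so does `(u, u)`. Thus a finite union of
rectangles covering the off-diagonal covers the diagonal too, while the substitution `s` only
looks at the diagonal, where every `X ×ˢ Xᶜ` is empty.
-/

open Set

section

variable {U : Type*} {B : Set (Set U)}

def cell (X : Set U) (u : U) : Set U := {x | x ∈ X ↔ u ∈ X}

lemma mem_cell_self (X : Set U) (u : U) : u ∈ cell X u := Iff.rfl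

lemma cell_mem (hcompl : ∀ X ∈ B, Xᶜ ∈ B) {X : Set U} (hX : X ∈ B) (u : U) : cell X u ∈ B := by
  by_cases hu : u ∈ X
  · convert hX using 1
    ext x
    simp [cell, hu]
  · convert hcompl X hX using 1
    ext x
    simp [cell, hu]

lemma nontrivial_of_atomless (hatomless : ∀ X ∈ B, X ≠ ∅ → ∃ Y ∈ B, Y ≠ ∅ ∧ Y ⊂ X)
    {X : Set U} (hX : X ∈ B) (hne : X.Nonempty) : X.Nontrivial := by
  obtain ⟨Y, -, hYne, hYX⟩ := hatomless X hX hne.ne_empty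
  obtain ⟨y, hy⟩ := nonempty_iff_ne_empty.2 hYne
  obtain ⟨x, hx, hxY⟩ := exists_of_ssubset hYX
  exact ⟨x, hx, y, hYX.subset hy, fun h => hxY (h ▸ hy)⟩

theorem iUnion_prod_eq_univ_of_offDiag_subset {ι : Type*} [Finite ι]
    (huniv : univ ∈ B) (hinter : ∀ X ∈ B, ∀ Y ∈ B, X ∩ Y ∈ B) (hcompl : ∀ X ∈ B, Xᶜ ∈ B)
    (hatomless : ∀ X ∈ B, X ≠ ∅ → ∃ Y ∈ B, Y ≠ ∅ ∧ Y ⊂ X)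
    {X Y : ι → Set U} (hX : ∀ i, X i ∈ B) (hY : ∀ i, Y i ∈ B)
    (hoff : {p : U × U | p.1 ≠ p.2} ⊆ ⋃ i, X i ×ˢ Y i) :
    ⋃ i, X i ×ˢ Y i = univ := by
  refine eq_univ_of_forall fun ⟨u, v⟩ => ?_
  rcases ne_or_eq u v with huv | rfl
  · exact hoff huv
  set C := ⋂ i, cell (X i) u ∩ cell (Y i) u
  have hCB : C ∈ B :=
    InfClosed.iInf_mem (fun _ hP _ hQ => hinter _ hP _ hQ) huniv fun i =>
      hinter _ (cell_mem hcompl (hX i) u) _ (cell_mem hcompl (hY i) u)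
  have huC : u ∈ C := mem_iInter.2 fun i => ⟨mem_cell_self _ u, mem_cell_self _ u⟩
  obtain ⟨x, hx, y, hy, hxy⟩ := nontrivial_of_atomless hatomless hCB ⟨u, huC⟩
  obtain ⟨i, hxX, hyY⟩ := mem_iUnion.1 (@hoff (x, y) hxy)
  exact mem_iUnion.2 ⟨i, (mem_iInter.1 hx i).1.mp hxX, (mem_iInter.1 hy i).2.mp hyY⟩

end

theorem stmt4_general {U : Type*} (B : Set (Set U))
    (hex : ∃ u v : U, u ≠ v)
    (huniv : Set.univ ∈ B)
    (hinter : ∀ X ∈ B, ∀ Y ∈ B, X ∩ Y ∈ B)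
    (hcompl : ∀ X ∈ B, Xᶜ ∈ B)
    (hatomless : ∀ X ∈ B, X ≠ ∅ → ∃ Y ∈ B, Y ≠ ∅ ∧ Y ⊂ X)
    (hsep : ∀ u v : U, u ≠ v → ∃ X ∈ B, u ∈ X ∧ v ∉ X)
    (A : Set (Set (U × U)))
    (hA : ∀ Z : Set (U × U), Z ∈ A ↔
      ∃ (n : ℕ) (X Y : Fin n → Set U), (∀ i, X i ∈ B) ∧ (∀ i, Y i ∈ B) ∧
        Z = ⋃ i, X i ×ˢ Y i)
    (s : Set (U × U) → Set (U × U))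
    (hs : ∀ Z : Set (U × U), s Z = {p : U × U | (p.1, p.1) ∈ Z}) :
    (∀ a ∈ A, {p : U × U | p.1 ≠ p.2} ⊆ a → a = Set.univ) ∧
    (Set.univ : Set (U × U)) ∈ A ∧
    (∀ a ∈ A, (∀ X ∈ B, X ×ˢ Xᶜ ⊆ a) → a = Set.univ) ∧
    (∀ X ∈ B, s (X ×ˢ Xᶜ) = ∅) ∧
    s Set.univ = Set.univ ∧
    (Set.univ : Set (U × U)) ≠ ∅ := by
  have hcover : ∀ a ∈ A, {p : U × U | p.1 ≠ p.2} ⊆ a → a = univ := by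
    intro a ha hoff
    obtain ⟨n, X, Y, hX, hY, rfl⟩ := (hA a).1 ha
    exact iUnion_prod_eq_univ_of_offDiag_subset huniv hinter hcompl hatomless hX hY hoff
  obtain ⟨u, -, -⟩ := hex
  refine ⟨hcover, (hA _).2 ⟨1, fun _ => univ, fun _ => univ, fun _ => huniv, fun _ => huniv, by simp [iUnion_const]⟩,
    fun a ha hrect => hcover a ha fun p hp => ?_, fun X _ => ?_, ?_,
    (nonempty_of_mem (mem_univ (u, u))).ne_empty⟩
  · obtain ⟨X, hXB, h₁, h₂⟩ := hsep p.1 p.2 hp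
    exact hrect X hXB ⟨h₁, h₂⟩
  · ext p
    simp [hs]
  · ext p
    simp [hs]

theorem stmt4 {U : Type*} (B : Set (Set U))
    (hex : ∃ u v : U, u ≠ v)
    (huniv : Set.univ ∈ B)
    (hinter : ∀ X ∈ B, ∀ Y ∈ B, X ∩ Y ∈ B)
    (hunion : ∀ X ∈ B, ∀ Y ∈ B, X ∪ Y ∈ B)
    (hcompl : ∀ X ∈ B, Xᶜ ∈ B)
    (hatomless : ∀ X ∈ B, X ≠ ∅ → ∃ Y ∈ B, Y ≠ ∅ ∧ Y ⊂ X)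
    (hsep : ∀ u v : U, u ≠ v → ∃ X ∈ B, u ∈ X ∧ v ∉ X)
    (A : Set (Set (U × U)))
    (hA : ∀ Z : Set (U × U), Z ∈ A ↔
      ∃ (n : ℕ) (X Y : Fin n → Set U), (∀ i, X i ∈ B) ∧ (∀ i, Y i ∈ B) ∧
        Z = ⋃ i, X i ×ˢ Y i)
    (s : Set (U × U) → Set (U × U))
    (hs : ∀ Z : Set (U × U), s Z = {p : U × U | (p.1, p.1) ∈ Z}) :
    (∀ a ∈ A, {p : U × U | p.1 ≠ p.2} ⊆ a → a = Set.univ) ∧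
    (Set.univ : Set (U × U)) ∈ A ∧
    (∀ a ∈ A, (∀ X ∈ B, X ×ˢ Xᶜ ⊆ a) → a = Set.univ) ∧
    (∀ X ∈ B, s (X ×ˢ Xᶜ) = ∅) ∧
    s Set.univ = Set.univ ∧
    (Set.univ : Set (U × U)) ≠ ∅ :=
  stmt4_general B hex huniv hinter hcompl hatomless hsep A hA s hs
end

section
/- Let G be a group acting on an atomic Boolean algebra A by Boolean algebra automorphisms s_g (with s_{gh} = s_g ∘ s_h and s_1 = id). Then for every a ∈ A with a ≠ ⊥ there is a Boolean algebra homomorphism f : A → Set G such that f(a) ≠ ∅ and ⋃_{x an atom of A} f(x) = G (i.e. f is a complete/atomic representation). -/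
theorem stmt6 {G A : Type*} [Group G] [BooleanAlgebra A] [IsAtomic A]
    (s : G → A → A)
    (hone : s 1 = id)
    (hmul : ∀ g g' : G, s (g * g') = s g ∘ s g')
    (hsinf : ∀ (g : G) (a b : A), s g (a ⊓ b) = s g a ⊓ s g b)
    (hscompl : ∀ (g : G) (a : A), s g aᶜ = (s g a)ᶜ)
    (hstop : ∀ g : G, s g ⊤ = ⊤) :
    ∀ a : A, a ≠ ⊥ → ∃ f : A → Set G,
      f ⊤ = Set.univ ∧
      (∀ x y : A, f (x ⊓ y) = f x ∩ f y) ∧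
      (∀ x : A, f xᶜ = (f x)ᶜ) ∧
      f a ≠ ∅ ∧
      ⋃ x ∈ {x : A | IsAtom x}, f x = Set.univ := by
  intro a ha
  -- basic facts about s
  have hinv : ∀ (g : G) (b : A), s g (s g⁻¹ b) = b := by
    intro g b
    have := congrFun (hmul g g⁻¹) b
    simp [hone] at this
    exact this.symm
  have hinv' : ∀ (g : G) (b : A), s g⁻¹ (s g b) = b := by
    intro g b
    have := hinv g⁻¹ b
    simpa using this
  have hmono : ∀ (g : G) (b c : A), b ≤ c → s g b ≤ s g c := by
    intro g b c h
    have : s g (b ⊓ c) = s g b := by rw [inf_eq_left.mpr h]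
    rw [hsinf] at this
    exact inf_eq_left.mp this
  have hsbot : ∀ g : G, s g ⊥ = ⊥ := by
    intro g
    have : s g (⊤ : A)ᶜ = (s g ⊤)ᶜ := hscompl g ⊤
    simpa [hstop g] using this
  -- get an atom below a
  obtain ⟨x₀, hx₀, hx₀a⟩ := (IsAtomic.eq_bot_or_exists_atom_le a).resolve_left ha
  -- atom ultrafilter fact
  have hatomc : ∀ (x c : A), IsAtom x → (x ≤ cᶜ ↔ ¬ x ≤ c) := by
    intro x c hx
    constructor
    · intro h1 h2
      exact hx.1 (le_bot_iff.mp (by simpa using le_inf h2 h1))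
    · intro h
      rcases eq_or_lt_of_le (inf_le_left : x ⊓ c ≤ x) with he | hl
      · exact absurd (inf_eq_left.mp he) h
      · exact le_compl_iff_disjoint_right.mpr (disjoint_iff.mpr (hx.2 _ hl))
  refine ⟨fun b => {g : G | x₀ ≤ s g b}, ?_, ?_, ?_, ?_, ?_⟩
  · ext g; simp [hstop g, le_top]
  · intro x y; ext g; simp [hsinf, le_inf_iff]
  · intro x; ext g; simp [hscompl, hatomc _ _ hx₀]
  · intro h
    simp only [Set.eq_empty_iff_forall_notMem, Set.mem_setOf_eq] at h
    exact h 1 (by simp [hone, hx₀a])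
  · ext g
    simp only [Set.mem_iUnion, Set.mem_univ, iff_true, Set.mem_setOf_eq]
    refine ⟨s g⁻¹ x₀, ?_, ?_⟩
    · constructor
      · intro hb
        apply hx₀.1
        rw [← hinv g x₀, hb, hsbot]
      · intro b hb
        have h1 : s g b ≤ x₀ := by
          have := hmono g _ _ hb.le
          rwa [hinv] at this
        have h2 : s g b ≠ x₀ := by
          intro he
          apply hb.ne
          rw [← hinv' g b, he]
        have := hx₀.2 _ (lt_of_le_of_ne h1 h2)
        rw [← hinv' g b, this, hsbot]
    · rw [hinv]
end

section
/- (Rasiowa–Sikorski for Boolean algebras) Let A be a Boolean algebra, a ∈ A with a ≠ ⊥, and let (Y_n)_{n ∈ ℕ} be countably many subsets of A, each of which has ⊥ as its only lower bound. Then there exists an ultrafilter F of A such that a ∈ F and for every n there is y ∈ Y_n with y ∉ F. -/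
/-!
Pass to complements: for each `n` the elements `b ≠ ⊤` lying above some member of `Y n` form a
cofinal subset of `{b // b ≠ ⊤}`, because `⊥` is the only lower bound of `Y n`. The
Rasiowa–Sikorski lemma gives an ideal of that poset containing `aᶜ` and meeting every one of these
cofinal sets; its downward closure in `A` is a proper ideal, and the complement of a maximal ideal
above it is the required ultrafilter.
-/

/-- An ultrafilter on a Boolean algebra. -/
structure BAUltrafilter (A : Type*) [BooleanAlgebra A] where
  carrier : Set A
  top_mem : ⊤ ∈ carrier
  bot_not_mem : ⊥ ∉ carrier
  inf_mem : ∀ a b : A, a ∈ carrier → b ∈ carrier → a ⊓ b ∈ carrier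
  mem_of_le : ∀ a b : A, a ∈ carrier → a ≤ b → b ∈ carrier
  ultra : ∀ a : A, a ∈ carrier ∨ aᶜ ∈ carrier

open Order

def BAUltrafilter.ofIsPrime {A : Type*} [BooleanAlgebra A] (I : Ideal A) [hI : I.IsPrime] :
    BAUltrafilter A where
  carrier := (I : Set A)ᶜ
  top_mem := hI.top_notMem
  bot_not_mem h := h I.bot_mem
  inf_mem _ _ ha hb hab := (hI.mem_or_mem hab).elim ha hb
  mem_of_le _ _ ha hab hb := ha (I.lower hab hb)
  ultra _ := hI.notMem_or_compl_notMem

theorem Order.Ideal.exists_isMaximal_forall_coe_mem {P : Type*} [PartialOrder P] [OrderTop P]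
    (I : Ideal {b : P // b ≠ ⊤}) : ∃ M : Ideal P, M.IsMaximal ∧ ∀ p ∈ I, (p : P) ∈ M := by
  let J : Ideal P :=
    { carrier := {x | ∃ p ∈ I, x ≤ p}
      lower' := fun _ _ hyx ⟨p, hp, hxp⟩ => ⟨p, hp, hyx.trans hxp⟩
      nonempty' := let ⟨p, hp⟩ := I.nonempty; ⟨p, p, hp, le_rfl⟩
      directed' := fun _ ⟨p, hp, hxp⟩ _ ⟨q, hq, hyq⟩ =>
        let ⟨r, hr, hpr, hqr⟩ := I.directed p hp q hq
        ⟨r, ⟨r, hr, le_rfl⟩, hxp.trans hpr, hyq.trans hqr⟩ }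
  have hJ : J.IsProper := Ideal.isProper_iff_top_notMem.2 fun ⟨p, _, htop⟩ => p.2 (top_le_iff.1 htop)
  obtain ⟨M, hJM, hM⟩ := hJ.exists_le_maximal
  exact ⟨M, hM, fun p hp => hJM ⟨p, hp, le_rfl⟩⟩

theorem exists_sup_ne_top_of_lowerBounds {A : Type*} [BooleanAlgebra A] {s : Set A}
    (hs : ∀ b : A, (∀ y ∈ s, b ≤ y) → b = ⊥) {b : A} (hb : b ≠ ⊤) : ∃ y ∈ s, b ⊔ y ≠ ⊤ := by
  by_contra! h
  exact hb (compl_eq_bot.1 (hs bᶜ fun y hy =>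
    codisjoint_iff_compl_le_right.1 (codisjoint_iff.2 (h y hy))))

def cofinalAbove {A : Type*} [BooleanAlgebra A] {s : Set A}
    (hs : ∀ b : A, (∀ y ∈ s, b ≤ y) → b = ⊥) : Cofinal {b : A // b ≠ ⊤} where
  carrier := {p | ∃ y ∈ s, y ≤ p}
  isCofinal p :=
    let ⟨y, hy, hpy⟩ := exists_sup_ne_top_of_lowerBounds hs p.2
    ⟨⟨p ⊔ y, hpy⟩, ⟨y, hy, le_sup_right⟩, le_sup_left⟩

theorem stmt8 {A : Type*} [BooleanAlgebra A] (a : A) (ha : a ≠ ⊥)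
    (Y : ℕ → Set A) (hY : ∀ n, ∀ b : A, (∀ y ∈ Y n, b ≤ y) → b = ⊥) :
    ∃ F : BAUltrafilter A, a ∈ F.carrier ∧
      ∀ n : ℕ, ∃ y ∈ Y n, y ∉ F.carrier := by
  let D (n : ℕ) : Cofinal {b : A // b ≠ ⊤} := cofinalAbove (hY n)
  let I := idealOfCofinals ⟨aᶜ, compl_eq_top.not.2 ha⟩ D
  obtain ⟨M, hM, hIM⟩ := I.exists_isMaximal_forall_coe_mem
  refine ⟨.ofIsPrime M, hM.notMem_of_compl_mem (hIM _ (mem_idealOfCofinals _ D)), fun n => ?_⟩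
  obtain ⟨p, ⟨y, hy, hyp⟩, hpI⟩ := cofinal_meets_idealOfCofinals _ D n
  exact ⟨y, hy, not_not.2 (M.lower hyp (hIM p hpI))⟩
end
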